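/- For the Cesàro matrix C of order α > 1, one has Σ_{v=1}^n (1/v)|ĉ_{n,v+1}| = O(1/n) as n → ∞. -/
import Mathlib


/-- The Cesàro number `A_n^α = Γ(n+α+1)/(Γ(α+1)Γ(n+1))`. -/
noncomputable def cesaroNum (α : ℝ) (n : ℕ) : ℝ :=
  Real.Gamma (n + α + 1) / (Real.Gamma (α + 1) * Real.Gamma (n + 1))

lemma cesaroNum_pos {β : ℝ} (hβ : 0 < β) (n : ℕ) : 0 < cesaroNum β n := by
  have hn : (0:ℝ) ≤ (n:ℝ) := n.cast_nonneg
  unfold cesaroNum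
  exact div_pos (Real.Gamma_pos_of_pos (by linarith))
    (mul_pos (Real.Gamma_pos_of_pos (by linarith)) (Real.Gamma_pos_of_pos (by linarith)))

lemma cesaroNum_succ {β : ℝ} (hβ : 0 < β) (n : ℕ) :
    cesaroNum β (n+1) = cesaroNum β n + cesaroNum (β-1) (n+1) := by
  have hn : (0:ℝ) ≤ (n:ℝ) := n.cast_nonneg
  unfold cesaroNum
  push_cast
  have hb : Real.Gamma (β+1) = β * Real.Gamma β := Real.Gamma_add_one (ne_of_gt hβ)
  have e1 : ((n:ℝ)+1) + β + 1 = ((n:ℝ) + β + 1) + 1 := by ring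
  have e2 : ((n:ℝ)+1) + (β - 1) + 1 = (n:ℝ) + β + 1 := by ring
  have e3 : (β - 1) + 1 = β := by ring
  have e4 : ((n:ℝ)+1) + 1 = ((n:ℝ)+1) + 1 := rfl
  rw [e1, e2, e3, Real.Gamma_add_one (show ((n:ℝ)+β+1) ≠ 0 by positivity),
    Real.Gamma_add_one (show ((n:ℝ)+1) ≠ 0 by positivity), hb]
  have g1 : Real.Gamma β ≠ 0 := ne_of_gt (Real.Gamma_pos_of_pos hβ)
  have g2 : Real.Gamma ((n:ℝ)+1) ≠ 0 := ne_of_gt (Real.Gamma_pos_of_pos (by linarith))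
  have g3 : Real.Gamma ((n:ℝ)+β+1) ≠ 0 := ne_of_gt (Real.Gamma_pos_of_pos (by linarith))
  field_simp
  ring

lemma sum_cesaro {β : ℝ} (hβ : 0 < β) (m : ℕ) :
    ∑ j ∈ Finset.range (m+1), cesaroNum (β-1) j = cesaroNum β m := by
  induction m with
  | zero =>
    simp [cesaroNum]
    rw [div_self (ne_of_gt (Real.Gamma_pos_of_pos hβ)),
      div_self (ne_of_gt (Real.Gamma_pos_of_pos (by linarith : (0:ℝ) < β + 1)))]
  | succ k ih =>
    rw [Finset.sum_range_succ, ih, ← cesaroNum_succ hβ]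


/-- For the Cesàro matrix of order `α > 1`,
`Σ_{v=1}^n (1/v)|ĉ_{n,v+1}| = O(1/n)`. -/
theorem cesaro_hat_weighted_sum_bound (α : ℝ) (hα : 1 < α)
    (chat : ℕ → ℕ → ℝ)
    (hchat : ∀ n i : ℕ, 1 ≤ i → i ≤ n →
      chat n i = (i : ℝ) * cesaroNum (α - 1) (n - i) / ((n : ℝ) * cesaroNum α n))
    (hchat0 : ∀ n i : ℕ, n < i → chat n i = 0) :
    ∃ C : ℝ, ∀ n : ℕ, 1 ≤ n →
      ∑ v ∈ Finset.Icc 1 n, (1 / (v : ℝ)) * |chat n (v + 1)| ≤ C / n := by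
  refine ⟨2, ?_⟩
  intro n hn
  obtain ⟨m, rfl⟩ : ∃ m, n = m + 1 := ⟨n - 1, (Nat.succ_pred_eq_of_pos hn).symm⟩
  have hA : 0 < cesaroNum α (m+1) := cesaroNum_pos (by linarith) (m+1)
  have hm1 : (0:ℝ) < (m:ℝ) + 1 := by positivity
  rw [Finset.sum_Icc_succ_top (by omega : 1 ≤ m + 1),
    hchat0 (m+1) (m+1+1) (by omega), abs_zero, mul_zero, add_zero]
  have key : ∀ v ∈ Finset.Icc 1 m,
      (1 / (v:ℝ)) * |chat (m+1) (v+1)| ≤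
        2 * cesaroNum (α-1) (m - v) / (((m:ℝ)+1) * cesaroNum α (m+1)) := by
    intro v hv
    obtain ⟨hv1, hv2⟩ := Finset.mem_Icc.mp hv
    rw [hchat (m+1) (v+1) (by omega) (by omega),
      (by omega : m + 1 - (v+1) = m - v)]
    have hApos : 0 < cesaroNum (α-1) (m - v) := cesaroNum_pos (by linarith) _
    have hv0 : (0:ℝ) < (v:ℝ) := by exact_mod_cast hv1
    push_cast
    rw [abs_of_pos (div_pos (mul_pos (by positivity) hApos) (mul_pos hm1 hA))]
    calc 1/(v:ℝ) * (((v:ℝ)+1) * cesaroNum (α-1) (m-v) / (((m:ℝ)+1) * cesaroNum α (m+1)))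
        = (((v:ℝ)+1)/(v:ℝ)) * (cesaroNum (α-1) (m-v) / (((m:ℝ)+1) * cesaroNum α (m+1))) := by
          ring
      _ ≤ 2 * (cesaroNum (α-1) (m-v) / (((m:ℝ)+1) * cesaroNum α (m+1))) := by
          have h1 : (1:ℝ) ≤ (v:ℝ) := by exact_mod_cast hv1
          exact mul_le_mul_of_nonneg_right ((div_le_iff₀ hv0).mpr (by linarith))
            (le_of_lt (div_pos hApos (mul_pos hm1 hA)))
      _ = 2 * cesaroNum (α-1) (m-v) / (((m:ℝ)+1) * cesaroNum α (m+1)) := by ring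
  have hre : ∑ v ∈ Finset.Icc 1 m, cesaroNum (α-1) (m - v)
      = ∑ j ∈ Finset.range m, cesaroNum (α-1) j := by
    rw [← Finset.Ico_add_one_right_eq_Icc, Finset.sum_Ico_eq_sum_range,
      (by omega : m + 1 - 1 = m)]
    rw [← Finset.sum_range_reflect (fun j => cesaroNum (α-1) j) m]
    exact Finset.sum_congr rfl fun i _ => by rw [(by omega : m - (1+i) = m - 1 - i)]
  have hS : ∑ j ∈ Finset.range m, cesaroNum (α-1) j ≤ cesaroNum α (m+1) := by
    rw [← sum_cesaro (by linarith : (0:ℝ) < α) (m+1)]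
    exact Finset.sum_le_sum_of_subset_of_nonneg
      (Finset.range_subset_range.mpr (by omega))
      (fun j _ _ => le_of_lt (cesaroNum_pos (by linarith) j))
  calc ∑ v ∈ Finset.Icc 1 m, (1 / (v:ℝ)) * |chat (m+1) (v+1)|
      ≤ ∑ v ∈ Finset.Icc 1 m,
          2 * cesaroNum (α-1) (m - v) / (((m:ℝ)+1) * cesaroNum α (m+1)) :=
        Finset.sum_le_sum key
    _ = (2 / (((m:ℝ)+1) * cesaroNum α (m+1))) *
          ∑ v ∈ Finset.Icc 1 m, cesaroNum (α-1) (m - v) := by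
        rw [Finset.mul_sum]; exact Finset.sum_congr rfl fun v _ => by ring
    _ ≤ (2 / (((m:ℝ)+1) * cesaroNum α (m+1))) * cesaroNum α (m+1) := by
        rw [hre]
        exact mul_le_mul_of_nonneg_left hS
          (le_of_lt (div_pos two_pos (mul_pos hm1 hA)))
    _ ≤ 2 / ((m:ℕ)+1 : ℝ) := by
        rw [div_mul_eq_mul_div, mul_comm (((m:ℝ)+1)) _, ← div_div,
          mul_div_assoc, div_self (ne_of_gt hA), mul_one]
    _ = 2 / ((m+1 : ℕ) : ℝ) := by push_cast; ring
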